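/- arXiv:1412.1619 — 5 statements merged into one kernel-verified Lean document; each statement's English description precedes it below -/
import Mathlib

section
/- Let a, b > 0 satisfy b = (1 + a)·log(1 + a) − a. Then a ≤ 3b / (2·log(√b + 1)). -/
open Real

-- log y <= sinh-based bound
lemma log_le_q (s : ℝ) (hs : 0 < s) : Real.log (s+1) ≤ (s^2+2*s)/(2*(s+1)) := by
  have hy : (1:ℝ) < s + 1 := by linarith
  have h0 : (0:ℝ) < s + 1 := by linarith
  have h1 : Real.log (s+1) < Real.sinh (Real.log (s+1)) :=
    Real.self_lt_sinh_iff.2 (Real.log_pos hy)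
  rw [Real.sinh_log h0] at h1
  have h2 : ((s+1) - (s+1)⁻¹)/2 = (s^2+2*s)/(2*(s+1)) := by
    field_simp
    ring
  linarith [h1, h2 ▸ h1]

-- tangent lower bound for b
lemma tan_lb (a b u0 A : ℝ) (ha : 0 < a)
    (hab : b = (1+a) * Real.log (1+a) - a) (hA : Real.exp u0 ≤ 1 + A) :
    u0 * (1+a) - A ≤ b := by
  have h1a : (0:ℝ) < 1 + a := by linarith
  have he : (0:ℝ) < Real.exp u0 := Real.exp_pos u0
  have h := Real.one_sub_inv_le_log_of_pos (x := (1+a)/Real.exp u0) (by positivity)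
  rw [Real.log_div (ne_of_gt h1a) (Real.exp_ne_zero _), Real.log_exp] at h
  have hinv : ((1+a)/Real.exp u0)⁻¹ = Real.exp u0/(1+a) := by
    rw [inv_div]
  rw [hinv] at h
  -- h : 1 - exp u0 / (1+a) ≤ log (1+a) - u0
  have h2 := mul_le_mul_of_nonneg_left h (le_of_lt h1a)
  have h3 : (1+a) * (Real.exp u0/(1+a)) = Real.exp u0 := by
    field_simp
  nlinarith [h2, h3]

-- exp (p/16) upper bound
lemma exp16_le (p : ℕ) (r : ℝ) (hr : 0 ≤ r) (h : (2.7182818286:ℝ)^p ≤ r^16) :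
    Real.exp ((p:ℝ)/16) ≤ r := by
  have h1 : Real.exp ((p:ℝ)/16)^16 = Real.exp 1 ^ p := by
    rw [← Real.exp_nat_mul, ← Real.exp_nat_mul]
    congr 1
    push_cast
    ring
  have h2 : Real.exp 1 ^ p ≤ (2.7182818286:ℝ)^p :=
    pow_le_pow_left₀ (Real.exp_pos 1).le Real.exp_one_lt_d9.le p
  refine le_of_pow_le_pow_left₀ (n := 16) (by norm_num) hr ?_
  calc Real.exp ((p:ℝ)/16)^16 = Real.exp 1 ^ p := h1
    _ ≤ (2.7182818286:ℝ)^p := h2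
    _ ≤ r^16 := h

-- Taylor lower bound for log near 0
lemma taylor_lb (a : ℝ) (h0 : 0 < a) (h1 : a ≤ 0.26) :
    a - a^2/2 + a^3/3 - a^4/4 + a^5/5 - a^6/6 - 2*a^7 ≤ Real.log (1+a) := by
  have hx : |(-a)| < 1 := by rw [abs_neg, abs_of_pos h0]; linarith
  have h := Real.abs_log_sub_add_sum_range_le hx 6
  rw [show (1:ℝ) - -a = 1 + a by ring] at h
  have hsum : (∑ i ∈ Finset.range 6, (-a) ^ (i + 1) / (i + 1))
      = -a + a^2/2 - a^3/3 + a^4/4 - a^5/5 + a^6/6 := by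
    simp [Finset.sum_range_succ]
    ring
  rw [hsum] at h
  have habs := abs_le.1 h
  have hb : |(-a)| = a := by rw [abs_neg, abs_of_pos h0]
  rw [hb] at habs
  have hrem : a^7/(1-a) ≤ 2*a^7 := by
    rw [div_le_iff₀ (by linarith)]
    nlinarith [pow_pos h0 7]
  nlinarith [habs.1, hrem]


set_option maxHeartbeats 2000000 in
theorem stmt_1 (a b : ℝ) (ha : 0 < a) (hb : 0 < b)
    (hab : b = (1 + a) * Real.log (1 + a) - a) :
    a ≤ 3 * b / (2 * Real.log (Real.sqrt b + 1)) := by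
  have h1a : (0:ℝ) < 1 + a := by linarith
  have hu : Real.log (1+a) ≤ a := by
    have := Real.log_le_sub_one_of_pos h1a; linarith
  have hupos : 0 < Real.log (1+a) := Real.log_pos (by linarith)
  have hs0 : 0 ≤ Real.sqrt b := Real.sqrt_nonneg b
  have hspos : 0 < Real.sqrt b := Real.sqrt_pos.2 hb
  have hs2 : Real.sqrt b ^ 2 = b := Real.sq_sqrt hb.le
  have hsa : Real.sqrt b ≤ a := by
    have hba : b ≤ a^2 := by nlinarith [hu, hupos]
    calc Real.sqrt b ≤ Real.sqrt (a^2) := Real.sqrt_le_sqrt hba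
      _ = a := by rw [Real.sqrt_sq ha.le]
  have hLpos : 0 < Real.log (Real.sqrt b + 1) := Real.log_pos (by linarith)
  rw [le_div_iff₀ (by positivity)]
  rcases le_or_gt (Real.log (1+a)) (9/4) with hcase | hcase
  · -- small case
    set s := Real.sqrt b with hsdef
    have ha849 : a ≤ (849/100 : ℝ) := by
      have he1 : 1 + a = Real.exp (Real.log (1+a)) := (Real.exp_log h1a).symm
      have he2 : Real.exp (Real.log (1+a)) ≤ Real.exp ((36:ℝ)/16) := by
        apply Real.exp_le_exp.2; linarith
      have he3 : Real.exp ((36:ℝ)/16) ≤ (949/100 : ℝ) := by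
        have h := exp16_le 36 (949/100) (by norm_num) (by norm_num)
        exact_mod_cast h
      linarith
    have key : 0 ≤ 3*s^2 + (3-a)*s - 2*a := by
      rcases le_or_gt a (26/100 : ℝ) with hI0 | hI0
      · have hlog := taylor_lb a ha (by norm_num; linarith)
        have hBpoly : a^2/2 - a^3/6 + a^4/12 - a^5/20 - 3*a^7 ≤ b := by
          nlinarith [hlog, ha.le, hI0, pow_pos ha 6, pow_pos ha 7, pow_pos ha 8,
            mul_nonneg (pow_pos ha 6).le (sub_nonneg.2 hI0)]
        have htB : ((67/100)*a)^2 ≤ s^2 := by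
          nlinarith [hBpoly, hs2, ha.le, hI0, mul_nonneg (mul_nonneg ha.le ha.le) (sub_nonneg.2 hI0),
            mul_nonneg (mul_nonneg (mul_nonneg ha.le ha.le) (mul_nonneg ha.le ha.le)) (sub_nonneg.2 hI0),
            pow_pos ha 5, pow_pos ha 7]
        have ht : (67/100)*a ≤ s := by
          calc (67/100 : ℝ)*a = Real.sqrt (((67/100)*a)^2) := (Real.sqrt_sq (by positivity)).symm
            _ ≤ Real.sqrt (s^2) := Real.sqrt_le_sqrt htB
            _ = s := Real.sqrt_sq hs0
        have hch4 : (0:ℝ) ≤ 6*((67/100)*a)+3-a := by linarith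
        nlinarith [sq_nonneg (s-(67/100)*a), mul_nonneg (sub_nonneg.2 ht) hch4,
          hs2, hBpoly, ha.le, hI0, mul_nonneg ha.le ha.le]
      · rcases le_or_gt a ((9/20) : ℝ) with hK1 | hK1
        · have hexp : Real.exp (5/16) ≤ 1 + (367/1000) := by
            have h := exp16_le 5 (1 + (367/1000)) (by norm_num) (by norm_num)
            exact_mod_cast h
          have hB : (5/16 : ℝ)*(1+a) - (367/1000) ≤ b := tan_lb a b _ _ ha hab hexp
          have h1 : (0:ℝ) ≤ a - (13/50) := by linarith
          have h2 : (0:ℝ) ≤ (9/20) - a := by linarith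
          have htB : (((6837/10000))*a+((-9/625)))^2 ≤ s^2 := by nlinarith [hB, hs2, mul_nonneg h1 h2]
          have ht0 : (0:ℝ) ≤ ((6837/10000))*a+((-9/625)) := by linarith
          have ht : ((6837/10000))*a+((-9/625)) ≤ s := by
            calc ((6837/10000))*a+((-9/625)) = Real.sqrt ((((6837/10000))*a+((-9/625)))^2) := (Real.sqrt_sq ht0).symm
              _ ≤ Real.sqrt (s^2) := Real.sqrt_le_sqrt htB
              _ = s := Real.sqrt_sq hs0
          have hch4 : (0:ℝ) ≤ 6*(((6837/10000))*a+((-9/625)))+3-a := by linarith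
          nlinarith [mul_nonneg h1 h2, sq_nonneg (s-(((6837/10000))*a+((-9/625)))),
            mul_nonneg (sub_nonneg.2 ht) hch4, hs2, hB,
            sq_nonneg (2*a - ((13/50)+(9/20)))]
        · rcases le_or_gt a ((4/5) : ℝ) with hK2 | hK2
          · have hexp : Real.exp (8/16) ≤ 1 + (6489/10000) := by
              have h := exp16_le 8 (1 + (6489/10000)) (by norm_num) (by norm_num)
              exact_mod_cast h
            have hB : (8/16 : ℝ)*(1+a) - (6489/10000) ≤ b := tan_lb a b _ _ ha hab hexp
            have h1 : (0:ℝ) ≤ a - (9/20) := by linarith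
            have h2 : (0:ℝ) ≤ (4/5) - a := by linarith
            have htB : (((643/1000))*a+((-3/200)))^2 ≤ s^2 := by nlinarith [hB, hs2, mul_nonneg h1 h2]
            have ht0 : (0:ℝ) ≤ ((643/1000))*a+((-3/200)) := by linarith
            have ht : ((643/1000))*a+((-3/200)) ≤ s := by
              calc ((643/1000))*a+((-3/200)) = Real.sqrt ((((643/1000))*a+((-3/200)))^2) := (Real.sqrt_sq ht0).symm
                _ ≤ Real.sqrt (s^2) := Real.sqrt_le_sqrt htB
                _ = s := Real.sqrt_sq hs0
            have hch4 : (0:ℝ) ≤ 6*(((643/1000))*a+((-3/200)))+3-a := by linarith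
            nlinarith [mul_nonneg h1 h2, sq_nonneg (s-(((643/1000))*a+((-3/200)))),
              mul_nonneg (sub_nonneg.2 ht) hch4, hs2, hB,
              sq_nonneg (2*a - ((9/20)+(4/5)))]
          · rcases le_or_gt a ((7/5) : ℝ) with hK3 | hK3
            · have hexp : Real.exp (12/16) ≤ 1 + (2793/2500) := by
                have h := exp16_le 12 (1 + (2793/2500)) (by norm_num) (by norm_num)
                exact_mod_cast h
              have hB : (12/16 : ℝ)*(1+a) - (2793/2500) ≤ b := tan_lb a b _ _ ha hab hexp
              have h1 : (0:ℝ) ≤ a - (4/5) := by linarith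
              have h2 : (0:ℝ) ≤ (7/5) - a := by linarith
              have htB : (((573/1000))*a+((23/1000)))^2 ≤ s^2 := by nlinarith [hB, hs2, mul_nonneg h1 h2]
              have ht0 : (0:ℝ) ≤ ((573/1000))*a+((23/1000)) := by linarith
              have ht : ((573/1000))*a+((23/1000)) ≤ s := by
                calc ((573/1000))*a+((23/1000)) = Real.sqrt ((((573/1000))*a+((23/1000)))^2) := (Real.sqrt_sq ht0).symm
                  _ ≤ Real.sqrt (s^2) := Real.sqrt_le_sqrt htB
                  _ = s := Real.sqrt_sq hs0
              have hch4 : (0:ℝ) ≤ 6*(((573/1000))*a+((23/1000)))+3-a := by linarith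
              nlinarith [mul_nonneg h1 h2, sq_nonneg (s-(((573/1000))*a+((23/1000)))),
                mul_nonneg (sub_nonneg.2 ht) hch4, hs2, hB,
                sq_nonneg (2*a - ((4/5)+(7/5)))]
            · rcases le_or_gt a ((12/5) : ℝ) with hK4 | hK4
              · have hexp : Real.exp (17/16) ≤ 1 + (18937/10000) := by
                  have h := exp16_le 17 (1 + (18937/10000)) (by norm_num) (by norm_num)
                  exact_mod_cast h
                have hB : (17/16 : ℝ)*(1+a) - (18937/10000) ≤ b := tan_lb a b _ _ ha hab hexp
                have h1 : (0:ℝ) ≤ a - (7/5) := by linarith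
                have h2 : (0:ℝ) ≤ (12/5) - a := by linarith
                have htB : (((1/2))*a+((109/1000)))^2 ≤ s^2 := by nlinarith [hB, hs2, mul_nonneg h1 h2]
                have ht0 : (0:ℝ) ≤ ((1/2))*a+((109/1000)) := by linarith
                have ht : ((1/2))*a+((109/1000)) ≤ s := by
                  calc ((1/2))*a+((109/1000)) = Real.sqrt ((((1/2))*a+((109/1000)))^2) := (Real.sqrt_sq ht0).symm
                    _ ≤ Real.sqrt (s^2) := Real.sqrt_le_sqrt htB
                    _ = s := Real.sqrt_sq hs0
                have hch4 : (0:ℝ) ≤ 6*(((1/2))*a+((109/1000)))+3-a := by linarith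
                nlinarith [mul_nonneg h1 h2, sq_nonneg (s-(((1/2))*a+((109/1000)))),
                  mul_nonneg (sub_nonneg.2 ht) hch4, hs2, hB,
                  sq_nonneg (2*a - ((7/5)+(12/5)))]
              · rcases le_or_gt a ((21/5) : ℝ) with hK5 | hK5
                · have hexp : Real.exp (23/16) ≤ 1 + (32103/10000) := by
                    have h := exp16_le 23 (1 + (32103/10000)) (by norm_num) (by norm_num)
                    exact_mod_cast h
                  have hB : (23/16 : ℝ)*(1+a) - (32103/10000) ≤ b := tan_lb a b _ _ ha hab hexp
                  have h1 : (0:ℝ) ≤ a - (12/5) := by linarith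
                  have h2 : (0:ℝ) ≤ (21/5) - a := by linarith
                  have htB : (((427/1000))*a+((269/1000)))^2 ≤ s^2 := by nlinarith [hB, hs2, mul_nonneg h1 h2]
                  have ht0 : (0:ℝ) ≤ ((427/1000))*a+((269/1000)) := by linarith
                  have ht : ((427/1000))*a+((269/1000)) ≤ s := by
                    calc ((427/1000))*a+((269/1000)) = Real.sqrt ((((427/1000))*a+((269/1000)))^2) := (Real.sqrt_sq ht0).symm
                      _ ≤ Real.sqrt (s^2) := Real.sqrt_le_sqrt htB
                      _ = s := Real.sqrt_sq hs0
                  have hch4 : (0:ℝ) ≤ 6*(((427/1000))*a+((269/1000)))+3-a := by linarith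
                  nlinarith [mul_nonneg h1 h2, sq_nonneg (s-(((427/1000))*a+((269/1000)))),
                    mul_nonneg (sub_nonneg.2 ht) hch4, hs2, hB,
                    sq_nonneg (2*a - ((12/5)+(21/5)))]
                · have hexp : Real.exp (31/16) ≤ 1 + (11883/2000) := by
                    have h := exp16_le 31 (1 + (11883/2000)) (by norm_num) (by norm_num)
                    exact_mod_cast h
                  have hB : (31/16 : ℝ)*(1+a) - (11883/2000) ≤ b := tan_lb a b _ _ ha hab hexp
                  have h1 : (0:ℝ) ≤ a - (21/5) := by linarith
                  have h2 : (0:ℝ) ≤ (849/100) - a := by linarith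
                  have htB : (((87/250))*a+((57/100)))^2 ≤ s^2 := by nlinarith [hB, hs2, mul_nonneg h1 h2]
                  have ht0 : (0:ℝ) ≤ ((87/250))*a+((57/100)) := by linarith
                  have ht : ((87/250))*a+((57/100)) ≤ s := by
                    calc ((87/250))*a+((57/100)) = Real.sqrt ((((87/250))*a+((57/100)))^2) := (Real.sqrt_sq ht0).symm
                      _ ≤ Real.sqrt (s^2) := Real.sqrt_le_sqrt htB
                      _ = s := Real.sqrt_sq hs0
                  have hch4 : (0:ℝ) ≤ 6*(((87/250))*a+((57/100)))+3-a := by linarith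
                  nlinarith [mul_nonneg h1 h2, sq_nonneg (s-(((87/250))*a+((57/100)))),
                    mul_nonneg (sub_nonneg.2 ht) hch4, hs2, hB,
                    sq_nonneg (2*a - ((21/5)+(849/100)))]
    have hlog := log_le_q s hspos
    have h6 : a * (s^2+2*s) ≤ 3*b*(s+1) := by
      nlinarith [mul_nonneg hspos.le key, hs2]
    have h7 : 2 * Real.log (s+1) ≤ (s^2+2*s)/(s+1) := by
      rw [show (s^2+2*s)/(s+1) = 2*((s^2+2*s)/(2*(s+1))) by field_simp]
      linarith [hlog]
    have hsp1 : (0:ℝ) < s + 1 := by linarith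
    have h8 : a * ((s^2+2*s)/(s+1)) ≤ 3*b := by
      rw [← mul_div_assoc, div_le_iff₀ hsp1]
      linarith [h6]
    have h9 : a * (2 * Real.log (s+1)) ≤ a * ((s^2+2*s)/(s+1)) :=
      mul_le_mul_of_nonneg_left h7 ha.le
    calc a * (2 * Real.log (s + 1)) ≤ a * ((s^2+2*s)/(s+1)) := h9
      _ ≤ 3 * b := h8
  · -- large case
    have hls : Real.log (Real.sqrt b + 1) ≤ Real.log (1+a) := by
      apply Real.log_le_log (by positivity)
      linarith [hsa]
    have hexp2 : Real.exp 2 < 7.389057 := by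
      have h := Real.exp_one_lt_d9
      have h2 : Real.exp 2 = Real.exp 1 * Real.exp 1 := by
        rw [← Real.exp_add]; norm_num
      nlinarith [Real.exp_pos 1]
    have hkey : (1+a)*(3 - Real.log (1+a)) ≤ 7.389057 := by
      rcases le_or_gt 3 (Real.log (1+a)) with h3 | h3
      · nlinarith
      · have h4 : (2 - Real.log (1+a)) + 1 ≤ Real.exp (2 - Real.log (1+a)) :=
          Real.add_one_le_exp _
        have h5 : (1+a) * Real.exp (2 - Real.log (1+a)) = Real.exp 2 := by
          have h5' : Real.exp (Real.log (1+a)) * Real.exp (2 - Real.log (1+a)) = Real.exp 2 := by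
            rw [← Real.exp_add]; ring_nf
          rw [Real.exp_log h1a] at h5'; exact h5'
        nlinarith [Real.exp_pos (2 - Real.log (1+a)), h4, h5, hexp2]
    have h10 : a * Real.log (Real.sqrt b + 1) ≤ a * Real.log (1+a) :=
      mul_le_mul_of_nonneg_left hls ha.le
    nlinarith [h10, hkey, hcase, hab]
end

section
/- The Lambert W function satisfies W(x) ≤ log((x + C)/(1 + log C)) for all x > −1/e and all C > 1/e. -/
/-!
Write `x = w e^w`. Applying `1 + t ≤ e^t` at `t = log C - w` and multiplying by `e^w` gives
`e^w (1 + log C) ≤ w e^w + C = x + C`; since `C > 1/e` means `1 + log C > 0`, taking logarithms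
yields `w ≤ log ((x + C) / (1 + log C))`.
-/

namespace Real

theorem exp_mul_one_add_log_le (w : ℝ) {C : ℝ} (hC : 0 < C) :
    exp w * (1 + log C) ≤ w * exp w + C := by
  have h := add_one_le_exp (log C - w)
  rw [exp_sub, exp_log hC, le_div_iff₀ (exp_pos w)] at h
  linarith

theorem one_add_log_pos_of_inv_exp_one_lt {C : ℝ} (hC : 1 / exp 1 < C) : 0 < 1 + log C := by
  rw [one_div, ← exp_neg] at hC
  have := (lt_log_iff_exp_lt (lt_trans (exp_pos _) hC)).2 hC
  linarith

theorem le_log_mul_exp_add_div (w : ℝ) {C : ℝ} (hC : 1 / exp 1 < C) :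
    w ≤ log ((w * exp w + C) / (1 + log C)) := by
  have hlogC := one_add_log_pos_of_inv_exp_one_lt hC
  have hCpos : 0 < C := lt_trans (by positivity) hC
  calc w = log (exp w) := (log_exp w).symm
    _ ≤ log ((w * exp w + C) / (1 + log C)) :=
      log_le_log (exp_pos w) ((le_div_iff₀ hlogC).2 (exp_mul_one_add_log_le w hCpos))

end Real

theorem stmt_3 (W : ℝ → ℝ)
    (hW : ∀ x : ℝ, -1 / Real.exp 1 < x → W x * Real.exp (W x) = x ∧ -1 ≤ W x) :
    ∀ x : ℝ, -1 / Real.exp 1 < x → ∀ C : ℝ, 1 / Real.exp 1 < C →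
      W x ≤ Real.log ((x + C) / (1 + Real.log C)) := by
  intro x hx C hC
  have hWx := Real.le_log_mul_exp_add_div (W x) hC
  rwa [(hW x hx).1] at hWx
end

section
/- Let φ : ℝ → ℝ be nonnegative and H-smooth (its derivative is H-Lipschitz). Then for all x, z ∈ ℝ, |φ(x) − φ(z)| ≤ √(6H·(φ(x) + φ(z)))·|x − z|. -/
/-! Expanding `φ` to first order with remainder at most `H/2 (x - z)²` and using `φ ≥ 0`
gives the self-bounding estimate `φ'(t)² ≤ 2Hφ(t)` (a nonnegative quadratic has a
nonpositive discriminant). If `H (x - z)² ≤ φ x + φ z`, the expansion around `z` bounds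
`(φ x - φ z)²` by `2 φ'(z)² (x - z)² + H² (x - z)⁴ / 2 ≤ 9/2 · H (φ x + φ z) (x - z)²`;
otherwise the trivial bound `|φ x - φ z| ≤ φ x + φ z` already gives
`(φ x - φ z)² ≤ H (φ x + φ z) (x - z)²`. -/

lemma sq_le_six_mul_mul_sq_of_abs_le {Δ d P H L : ℝ} (hH : 0 ≤ H) (hd : d ^ 2 ≤ 2 * H * P)
    (hΔd : |Δ| ≤ |d| * |L| + H / 2 * L ^ 2) (hΔP : |Δ| ≤ P) : Δ ^ 2 ≤ 6 * H * P * L ^ 2 := by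
  have hP : 0 ≤ P := (abs_nonneg Δ).trans hΔP
  rcases le_total (H * L ^ 2) P with hnear | hfar
  · have hHL : 0 ≤ H * L ^ 2 := by positivity
    calc Δ ^ 2 = |Δ| ^ 2 := (sq_abs Δ).symm
      _ ≤ (|d| * |L| + H / 2 * L ^ 2) ^ 2 := pow_le_pow_left₀ (abs_nonneg Δ) hΔd 2
      _ ≤ 2 * d ^ 2 * L ^ 2 + (H * L ^ 2) ^ 2 / 2 := by
        nlinarith [sq_nonneg (|d| * |L| - H / 2 * L ^ 2), sq_abs d, sq_abs L]
      _ ≤ 2 * (2 * H * P) * L ^ 2 + H * L ^ 2 * P / 2 := by gcongr; nlinarith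
      _ ≤ 6 * H * P * L ^ 2 := by nlinarith
  · calc Δ ^ 2 = |Δ| ^ 2 := (sq_abs Δ).symm
      _ ≤ P ^ 2 := pow_le_pow_left₀ (abs_nonneg Δ) hΔP 2
      _ ≤ P * (H * L ^ 2) := by rw [sq]; exact mul_le_mul_of_nonneg_left hfar hP
      _ ≤ 6 * H * P * L ^ 2 := by nlinarith

section LipschitzDeriv

variable {f : ℝ → ℝ} {H : ℝ}

lemma nonneg_of_abs_deriv_sub_le (hLip : ∀ s t : ℝ, |deriv f s - deriv f t| ≤ H * |s - t|) :
    0 ≤ H :=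
  (abs_nonneg _).trans (by simpa using hLip 1 0)

lemma abs_sub_sub_deriv_mul_le_of_le (hf : Differentiable ℝ f)
    (hLip : ∀ s t : ℝ, |deriv f s - deriv f t| ≤ H * |s - t|) {a b : ℝ} (hab : a ≤ b) :
    |f b - f a - deriv f a * (b - a)| ≤ H / 2 * (b - a) ^ 2 := by
  have hB : ∀ t, HasDerivAt (fun t => H / 2 * (t - a) ^ 2) (H * (t - a)) t := fun t => by
    refine ((((hasDerivAt_id' t).sub_const a).fun_pow 2).const_mul (H / 2)).congr_deriv ?_
    norm_num
    ring
  refine image_norm_le_of_norm_deriv_right_le_deriv_boundary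
    (f := fun t => f t - f a - deriv f a * (t - a)) (f' := fun t => deriv f t - deriv f a)
    (by have := hf.continuous; fun_prop) (fun t _ => ?_) (by simp) hB (fun t ht => ?_) ⟨hab, le_rfl⟩
  · have := ((hf t).hasDerivAt.sub_const (f a)).fun_sub
      (((hasDerivAt_id' t).sub_const a).const_mul (deriv f a))
    simpa using this.hasDerivWithinAt
  · simpa [abs_of_nonneg (sub_nonneg.2 ht.1)] using hLip t a

lemma abs_sub_sub_deriv_mul_le (hf : Differentiable ℝ f)
    (hLip : ∀ s t : ℝ, |deriv f s - deriv f t| ≤ H * |s - t|) (a b : ℝ) :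
    |f b - f a - deriv f a * (b - a)| ≤ H / 2 * (b - a) ^ 2 := by
  rcases le_total a b with hab | hba
  · exact abs_sub_sub_deriv_mul_le_of_le hf hLip hab
  · have hg : Differentiable ℝ (fun t => f (-t)) := hf.comp differentiable_neg
    have hgLip : ∀ s t : ℝ, |deriv (fun t => f (-t)) s - deriv (fun t => f (-t)) t|
        ≤ H * |s - t| := fun s t => by
      rw [deriv_comp_neg, deriv_comp_neg, neg_sub_neg]
      simpa only [neg_sub_neg] using hLip (-t) (-s)
    have := abs_sub_sub_deriv_mul_le_of_le hg hgLip (neg_le_neg hba)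
    simp only [neg_neg, deriv_comp_neg] at this
    convert this using 2 <;> ring

lemma sq_deriv_le_two_mul (hf : Differentiable ℝ f) (hnn : ∀ t, 0 ≤ f t)
    (hLip : ∀ s t : ℝ, |deriv f s - deriv f t| ≤ H * |s - t|) (t : ℝ) :
    deriv f t ^ 2 ≤ 2 * H * f t := by
  have hquad : ∀ s : ℝ, 0 ≤ H / 2 * (s * s) + deriv f t * s + f t := fun s => by
    have := (abs_le.1 (abs_sub_sub_deriv_mul_le hf hLip t (t + s))).2
    simp only [add_sub_cancel_left] at this
    nlinarith [hnn (t + s)]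
  have := discrim_le_zero hquad
  rw [discrim] at this
  linarith

end LipschitzDeriv

theorem stmt_4 (φ : ℝ → ℝ) (H : ℝ)
    (hdiff : Differentiable ℝ φ)
    (hnn : ∀ t, 0 ≤ φ t)
    (hLip : ∀ s t : ℝ, |deriv φ s - deriv φ t| ≤ H * |s - t|) :
    ∀ x z : ℝ, |φ x - φ z| ≤ Real.sqrt (6 * H * (φ x + φ z)) * |x - z| := by
  intro x z
  have hH := nonneg_of_abs_deriv_sub_le hLip
  have htaylor := abs_sub_sub_deriv_mul_le hdiff hLip z x
  have hderiv := sq_deriv_le_two_mul hdiff hnn hLip z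
  have hsq : (φ x - φ z) ^ 2 ≤ 6 * H * (φ x + φ z) * (x - z) ^ 2 := by
    refine sq_le_six_mul_mul_sq_of_abs_le hH (hderiv.trans ?_) ?_ ?_
    · linarith [mul_nonneg hH (hnn x)]
    · have := abs_sub_abs_le_abs_sub (φ x - φ z) (deriv φ z * (x - z))
      rw [abs_mul] at this
      linarith
    · exact abs_sub_le_iff.2 ⟨by linarith [hnn z], by linarith [hnn x]⟩
  calc |φ x - φ z| ≤ Real.sqrt (6 * H * (φ x + φ z) * (x - z) ^ 2) := Real.abs_le_sqrt hsq
    _ = Real.sqrt (6 * H * (φ x + φ z)) * |x - z| := by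
      rw [Real.sqrt_mul' _ (sq_nonneg _), Real.sqrt_sq_eq_abs]
end

section
/- Suppose Z is a random variable such that for some v > 0 and all t ≥ 0, P(Z ≥ E[Z] + t) ≤ exp(−v·u(t/v)) where u(y) = (1+y)log(1+y) − y. Then for every η ≥ 0, with probability at least 1 − e^{−η}: Z ≤ E[Z] + (3η)/(2·log(1 + √(η/v))) and also Z ≤ E[Z] + (3/4)·η + (3/2)·√(v·η). -/
/-!
Put `s = √(η/v)` and `y = 3s² / (2 log(1 + s))`, so that the threshold is `t = v y`. Two
elementary logarithm bounds do everything. From `log(1 + y) ≥ 2y/(2 + y)` we get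
`u(y) ≥ (y/2) log(1 + y)`, and writing `1 + s = a³` the bound `log a ≤ (a - a⁻¹)/2` yields
`log(1 + y) ≥ (4/3) log(1 + s)`; together they give `v u(t/v) ≥ v s² = η`, so the tail bound at
`t` is at most `e^{-η}`. The same lower bound on `log(1 + s)` gives `y ≤ (3/4)s² + (3/2)s`, which
after multiplying by `v` is the second, explicit threshold.
-/

open MeasureTheory Real

noncomputable def bennett (y : ℝ) : ℝ := (1 + y) * log (1 + y) - y

lemma Real.log_le_sub_inv_div_two {x : ℝ} (hx : 1 ≤ x) : log x ≤ (x - x⁻¹) / 2 := by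
  rw [← sinh_log (by linarith)]
  exact self_le_sinh_iff.2 (log_nonneg hx)

lemma half_mul_log_one_add_le_bennett {y : ℝ} (hy : 0 ≤ y) :
    y / 2 * log (1 + y) ≤ bennett y := by
  have hlog := le_log_one_add_of_nonneg hy
  rw [div_le_iff₀ (by linarith)] at hlog
  unfold bennett
  linarith

lemma sq_le_bennett_of_cube {a : ℝ} (ha : 1 < a) :
    (a ^ 3 - 1) ^ 2 ≤ bennett ((a ^ 3 - 1) ^ 2 / (2 * log a)) := by
  set y := (a ^ 3 - 1) ^ 2 / (2 * log a)
  have hloga : 0 < log a := log_pos ha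
  have hy : y * (2 * log a) = (a ^ 3 - 1) ^ 2 := div_mul_cancel₀ _ (by positivity)
  -- `a (a³ - 1)² - (a⁴ - 1)(a² - 1) = (a - 1)² (a⁵ + a⁴ + a³ - a - 1)`
  have hpoly : (a ^ 4 - 1) * (a ^ 2 - 1) ≤ a * (a ^ 3 - 1) ^ 2 := by
    have : 0 ≤ a ^ 5 + a ^ 4 + a ^ 3 - a - 1 := by
      nlinarith [one_le_pow₀ (n := 3) ha.le, one_le_pow₀ (n := 4) ha.le,
        pow_le_pow_right₀ ha.le (show 1 ≤ 5 by norm_num)]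
    nlinarith [mul_nonneg (sq_nonneg (a - 1)) this]
  have hcube : 2 * (a ^ 4 - 1) * log a ≤ (a ^ 3 - 1) ^ 2 := by
    have h4 : 0 ≤ a ^ 4 - 1 := by nlinarith [one_le_pow₀ (n := 4) ha.le]
    calc 2 * (a ^ 4 - 1) * log a ≤ 2 * (a ^ 4 - 1) * ((a - a⁻¹) / 2) := by
          gcongr; exact log_le_sub_inv_div_two ha.le
      _ = (a ^ 4 - 1) * (a ^ 2 - 1) / a := by field_simp
      _ ≤ (a ^ 3 - 1) ^ 2 := by rwa [div_le_iff₀ (by linarith), mul_comm _ a]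
  have hy_ge : a ^ 4 ≤ 1 + y := by nlinarith
  have hlog_y : 4 * log a ≤ log (1 + y) := by
    calc 4 * log a = log (a ^ 4) := by rw [log_pow]; norm_num
      _ ≤ log (1 + y) := log_le_log (by positivity) hy_ge
  calc (a ^ 3 - 1) ^ 2 = y / 2 * (4 * log a) := by rw [← hy]; ring
    _ ≤ y / 2 * log (1 + y) := by gcongr
    _ ≤ bennett y := half_mul_log_one_add_le_bennett (by positivity)

lemma sq_le_bennett {s : ℝ} (hs : 0 < s) :
    s ^ 2 ≤ bennett (3 * s ^ 2 / (2 * log (1 + s))) := by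
  set a := exp (log (1 + s) / 3)
  have ha : 1 < a := one_lt_exp_iff.2 (by have := log_pos (by linarith : 1 < 1 + s); positivity)
  have ha3 : a ^ 3 = 1 + s := by
    rw [← exp_nat_mul, Nat.cast_ofNat, mul_div_cancel₀ _ three_ne_zero, exp_log (by linarith)]
  have hy_eq : 3 * s ^ 2 / (2 * log (1 + s)) = s ^ 2 / (2 * log a) := by
    rw [log_exp]; field_simp
  have := sq_le_bennett_of_cube ha
  rwa [ha3, add_sub_cancel_left, ← hy_eq] at this

lemma three_mul_sq_div_log_le {s : ℝ} (hs : 0 < s) :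
    3 * s ^ 2 / (2 * log (1 + s)) ≤ 3 / 4 * s ^ 2 + 3 / 2 * s := by
  have hlog := le_log_one_add_of_nonneg hs.le
  rw [div_le_iff₀ (mul_pos two_pos (log_pos (by linarith)))]
  calc 3 * s ^ 2 = (3 / 4 * s ^ 2 + 3 / 2 * s) * (2 * (2 * s / (s + 2))) := by
        field_simp; ring
    _ ≤ (3 / 4 * s ^ 2 + 3 / 2 * s) * (2 * log (1 + s)) := by gcongr

lemma ofReal_one_sub_le_measure_compl {α : Type*} [MeasurableSpace α] {μ : Measure α}
    [IsProbabilityMeasure μ] {s : Set α} {p : ℝ} (hp : 0 ≤ p) (hs : μ s ≤ ENNReal.ofReal p) :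
    ENNReal.ofReal (1 - p) ≤ μ sᶜ := by
  rw [ENNReal.ofReal_sub _ hp, ENNReal.ofReal_one, tsub_le_iff_right, ← measure_univ (μ := μ)]
  exact (measure_univ_le_add_compl s).trans (by rw [add_comm]; gcongr)

theorem stmt_17_general {Ωs : Type*} [MeasurableSpace Ωs] (P : Measure Ωs) [IsProbabilityMeasure P]
    (Z : Ωs → ℝ) (v : ℝ) (hv : 0 < v)
    (htail : ∀ t : ℝ, 0 ≤ t →
      P {ω | (∫ ω', Z ω' ∂P) + t ≤ Z ω} ≤
        ENNReal.ofReal (Real.exp (-(v * ((1 + t / v) * Real.log (1 + t / v) - t / v)))))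
    (η : ℝ) (hη : 0 ≤ η) :
    ENNReal.ofReal (1 - Real.exp (-η)) ≤
      P {ω | Z ω ≤ (∫ ω', Z ω' ∂P) + 3 * η / (2 * Real.log (1 + Real.sqrt (η / v))) ∧
             Z ω ≤ (∫ ω', Z ω' ∂P) + (3 / 4) * η + (3 / 2) * Real.sqrt (v * η)} := by
  rcases hη.eq_or_lt with rfl | hη
  · simp
  set m := ∫ ω', Z ω' ∂P
  set s := √(η / v)
  have hs : 0 < s := sqrt_pos.2 (div_pos hη hv)
  have hη_eq : η = v * s ^ 2 := by rw [sq_sqrt (div_pos hη hv).le]; field_simp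
  have hsqrt : √(v * η) = v * s := by
    rw [hη_eq, ← mul_assoc, ← sq, sqrt_mul (sq_nonneg v), sqrt_sq hv.le, sqrt_sq hs.le]
  set y := 3 * s ^ 2 / (2 * log (1 + s))
  have hy : 0 ≤ y := by have := log_pos (by linarith : 1 < 1 + s); positivity
  have hthreshold : 3 * η / (2 * log (1 + s)) = v * y := by rw [hη_eq]; ring
  have htail_y : P {ω | m + v * y ≤ Z ω} ≤ ENNReal.ofReal (exp (-η)) := by
    refine (htail (v * y) (mul_nonneg hv.le hy)).trans (ENNReal.ofReal_le_ofReal (exp_le_exp.2 ?_))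
    rw [mul_div_cancel_left₀ _ hv.ne', neg_le_neg_iff, hη_eq]
    exact mul_le_mul_of_nonneg_left (sq_le_bennett hs) hv.le
  have hy_le : v * y ≤ 3 / 4 * η + 3 / 2 * √(v * η) := by
    rw [hsqrt, hη_eq]
    exact (mul_le_mul_of_nonneg_left (three_mul_sq_div_log_le hs) hv.le).trans_eq (by ring)
  refine (ofReal_one_sub_le_measure_compl (exp_nonneg _) htail_y).trans (measure_mono ?_)
  intro ω hω
  simp only [Set.mem_compl_iff, Set.mem_ofPred_eq, not_le] at hω ⊢
  constructor <;> linarith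

theorem stmt_17 {Ωs : Type*} [MeasurableSpace Ωs] (P : Measure Ωs) [IsProbabilityMeasure P]
    (Z : Ωs → ℝ) (hZ : Integrable Z P) (v : ℝ) (hv : 0 < v)
    (htail : ∀ t : ℝ, 0 ≤ t →
      P {ω | (∫ ω', Z ω' ∂P) + t ≤ Z ω} ≤
        ENNReal.ofReal (Real.exp (-(v * ((1 + t / v) * Real.log (1 + t / v) - t / v)))))
    (η : ℝ) (hη : 0 ≤ η) :
    ENNReal.ofReal (1 - Real.exp (-η)) ≤
      P {ω | Z ω ≤ (∫ ω', Z ω' ∂P) + 3 * η / (2 * Real.log (1 + Real.sqrt (η / v))) ∧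
             Z ω ≤ (∫ ω', Z ω' ∂P) + (3 / 4) * η + (3 / 2) * Real.sqrt (v * η)} :=
  stmt_17_general P Z v hv htail η hη
end

section
/- For all η > 0 and v > 0: 3η / (2·log(1 + √(η/v))) ≤ (3/4)·η + (3/2)·√(v·η). -/
/-! With `s = √(η / v)`, the Padé-type bound `log (1 + s) ≥ 2 s / (s + 2)` turns the left-hand side
into at most `3η / 4 + 3η / (2 s)`, and `η / s = √(v η)`. -/

open Real

lemma div_two_mul_log_one_add_le {a s : ℝ} (ha : 0 ≤ a) (hs : 0 < s) :
    a / (2 * log (1 + s)) ≤ a / 4 + a / (2 * s) :=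
  calc a / (2 * log (1 + s)) ≤ a / (2 * (2 * s / (s + 2))) := by
        gcongr
        exact le_log_one_add_of_nonneg hs.le
    _ = a / 4 + a / (2 * s) := by field_simp; ring

lemma div_sqrt_div_eq_sqrt_mul {η v : ℝ} (hη : 0 ≤ η) (hv : 0 ≤ v) :
    η / √(η / v) = √(v * η) := by
  rw [sqrt_div hη, sqrt_mul hv, div_div_eq_mul_div, mul_div_right_comm, div_sqrt, mul_comm]

theorem stmt_18 (η v : ℝ) (hη : 0 < η) (hv : 0 < v) :
    3 * η / (2 * Real.log (1 + Real.sqrt (η / v))) ≤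
      (3 / 4) * η + (3 / 2) * Real.sqrt (v * η) := by
  have hs : 0 < √(η / v) := sqrt_pos.mpr (div_pos hη hv)
  calc 3 * η / (2 * log (1 + √(η / v)))
      ≤ 3 * η / 4 + 3 * η / (2 * √(η / v)) := div_two_mul_log_one_add_le (by positivity) hs
    _ = 3 / 4 * η + 3 / 2 * (η / √(η / v)) := by ring
    _ = 3 / 4 * η + 3 / 2 * √(v * η) := by rw [div_sqrt_div_eq_sqrt_mul hη.le hv.le]
end
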